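/- Under the same assumptions, and additionally the moment recursion for n = 5, one has I_6(y) = −(θ(y)/3)[−360 θ(y)^2 + 76 θ(y) θ'(y) − 2 θ'(y)^2 − 2 θ(y) θ''(y)] I_3(0). -/

import Mathlib

/-- Under the same assumptions as for the fifth moment, and additionally the
Kompaneets moment equation for `n = 5`, one finds
`I_6(y) = −(θ/3)[−360 θ² + 76 θ θ' − 2 θ'² − 2 θ θ''] I_3(0)`. -/
theorem sixth_moment_formula
    (I3 I4 I5 I6 θ : ℝ → ℝ)
    (hθsmooth : ContDiff ℝ (⊤ : ℕ∞) θ)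
    (hθpos : ∀ y, 0 ≤ y → 0 < θ y)
    (hI3const : ∀ y, 0 ≤ y → I3 y = I3 0)
    (hI3pos : 0 < I3 0)
    (hI4def : ∀ y, 0 ≤ y → I4 y = 4 * θ y * I3 0)
    (hI5def : ∀ y, 0 ≤ y →
      I5 y = -(θ y / 2) * (4 * deriv θ y - 40 * θ y) * I3 0)
    (hI5diff : Differentiable ℝ I5)
    (hrec5 : ∀ y, 0 ≤ y →
      deriv I5 y = ((5 : ℝ) - 2) * (((5 : ℝ) + 1) * I5 y - I6 y / θ y)) :
    ∀ y, 0 ≤ y →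
      I6 y = -(θ y / 3) *
        (-360 * θ y ^ 2 + 76 * θ y * deriv θ y - 2 * (deriv θ y) ^ 2
          - 2 * θ y * deriv (deriv θ) y) * I3 0 := by
  intro y hy
  have hθdiff : Differentiable ℝ θ := hθsmooth.differentiable (by simp)
  have hs : ContDiff ℝ ((⊤ : ℕ∞) : WithTop ℕ∞) θ := hθsmooth.of_le (by simp)
  have hθ'diff : Differentiable ℝ (deriv θ) :=
    ((ContDiff.iterate_deriv 1 hs)).differentiable (by simp)
  set g : ℝ → ℝ := fun y => -(θ y / 2) * (4 * deriv θ y - 40 * θ y) * I3 0 with hg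
  have hd : HasDerivAt θ (deriv θ y) y := (hθdiff y).hasDerivAt
  have hd2 : HasDerivAt (deriv θ) (deriv (deriv θ) y) y := (hθ'diff y).hasDerivAt
  have hgd : HasDerivAt g
      ((-(deriv θ y / 2) * (4 * deriv θ y - 40 * θ y) +
        -(θ y / 2) * (4 * deriv (deriv θ) y - 40 * deriv θ y)) * I3 0) y :=
    (((hd.div_const 2).neg.mul ((hd2.const_mul 4).sub (hd.const_mul 40))).mul_const (I3 0))
  set D : ℝ := (-(deriv θ y / 2) * (4 * deriv θ y - 40 * θ y) +
        -(θ y / 2) * (4 * deriv (deriv θ) y - 40 * deriv θ y)) * I3 0 with hD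
  have hUD : UniqueDiffWithinAt ℝ (Set.Ici (0:ℝ)) y := uniqueDiffOn_Ici 0 y hy
  have h1 : derivWithin I5 (Set.Ici 0) y = deriv I5 y :=
    ((hI5diff y).hasDerivAt.hasDerivWithinAt).derivWithin hUD
  have h2 : derivWithin g (Set.Ici 0) y = D :=
    (hgd.hasDerivWithinAt).derivWithin hUD
  have h3 : derivWithin I5 (Set.Ici 0) y = derivWithin g (Set.Ici 0) y := by
    apply derivWithin_congr
    · intro x hx; exact hI5def x hx
    · exact hI5def y hy
  have hderiv : deriv I5 y = D := by rw [← h1, h3, h2]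
  have hrec := hrec5 y hy
  rw [hderiv, hI5def y hy] at hrec
  have hθne : θ y ≠ 0 := (hθpos y hy).ne'
  field_simp [hD] at hrec ⊢
  rw [hD] at hrec; linarith [hrec]
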